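/- Let M be a valuated matroid on finite E with values in ℝ ∪ {∞} and w ∈ ℝ^E. No set of the form in_w(H), for H a valuated circuit of M, is contained in a basis of the initial matroid in_w(M); that is, every in_w(H) is dependent in in_w(M). -/

import Mathlib

/-- A valuated matroid of rank `r` on a finite ground set `E`, with values in `ℝ ∪ {∞}`:
a basis valuation function `p` on `binom(E,r)` (encoded as a function on all finsets which
is `∞` away from `r`-sets), not identically `∞`, satisfying the valuated basis exchange
axiom. -/
structure ValuatedMatroid (E : Type*) [DecidableEq E] [Fintype E] (r : ℕ) where
  p : Finset E → WithTop ℝ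
  card_of_ne_top : ∀ B : Finset E, p B ≠ ⊤ → B.card = r
  exists_ne_top : ∃ B : Finset E, p B ≠ ⊤
  exchange : ∀ A B : Finset E, A.card = r → B.card = r → ∀ a ∈ A \ B,
    ∃ b ∈ B \ A,
      p (insert b (A.erase a)) + p (insert a (B.erase b)) ≤ p A + p B

namespace ValuatedMatroid

variable {E : Type*} [DecidableEq E] [Fintype E] {r : ℕ}

/-- The shifted valuation `p_w(B) = p(B) − ∑_{e ∈ B} w_e`. -/
noncomputable def pw (M : ValuatedMatroid E r) (w : E → ℝ) (B : Finset E) : WithTop ℝ :=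
  M.p B + ((-(∑ e ∈ B, w e) : ℝ) : WithTop ℝ)

/-- The minimum of `p_w` over all subsets of `E` (equivalently over all `r`-subsets,
since `p` is `∞` elsewhere). -/
noncomputable def minVal (M : ValuatedMatroid E r) (w : E → ℝ) : WithTop ℝ :=
  (Finset.univ : Finset E).powerset.inf (M.pw w)

/-- `B` is a basis of the initial matroid `in_w(M)`: an `r`-subset minimizing `p_w`. -/
def IsInitBasis (M : ValuatedMatroid E r) (w : E → ℝ) (B : Finset E) : Prop :=
  B.card = r ∧ M.pw w B = M.minVal w

end ValuatedMatroid

namespace ValuatedMatroid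

variable {E : Type*} [DecidableEq E] [Fintype E] {r : ℕ}

/-- The fundamental circuit `H(B, e)` of `e` over a basis `B` of the underlying matroid:
`H(B,e)_{e'} = p(B ∪ e − e') − p(B)`. -/
noncomputable def fundCircuit (M : ValuatedMatroid E r) (B : Finset E) (e : E) :
    E → WithTop ℝ := fun e' =>
  M.p ((insert e B).erase e') + ((-(M.p B).untopD 0 : ℝ) : WithTop ℝ)

/-- A valuated circuit of `M`: a tropical scaling `λ ⊙ H(B, e)` of a fundamental
circuit over a basis `B` of the underlying matroid (`p(B) ≠ ∞`). -/
noncomputable def IsValuatedCircuit (M : ValuatedMatroid E r) (H : E → WithTop ℝ) : Prop :=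
  ∃ (B : Finset E) (e : E) (lam : ℝ), M.p B ≠ ⊤ ∧ e ∉ B ∧
    ∀ e', H e' = (lam : WithTop ℝ) + M.fundCircuit B e e'

/-- `in_w(H)`: the set of elements at which `H_e + w_e` is minimal. -/
def initSet (H : E → WithTop ℝ) (w : E → ℝ) : Set E :=
  {e | ∀ e', H e + (w e : WithTop ℝ) ≤ H e' + (w e' : WithTop ℝ)}

end ValuatedMatroid

open ValuatedMatroid

/-! Write `C = B' ∪ {e}` for the circuit's support, so that `H_x + w_x = p_w(C − x) + const`
for `x ∈ C` and `H_x = ∞` off `C`.  Pick `f ∈ in_w(H)` inside an initial basis `B`; then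
`f ∈ C`, and valuated exchange for `p_w` between `B` and `C − f` at `f` yields `b ∈ C − f`,
`b ∉ B`, with `p_w(B − f + b) + p_w(C − b) ≤ p_w(B) + p_w(C − f)`.  Minimality of `p_w(B)`
gives `p_w(C − b) ≤ p_w(C − f)`, i.e. `b ∈ in_w(H) ⊆ B`, a contradiction. -/

theorem Finset.sum_insert_erase {α β : Type*} [DecidableEq α] [AddCommGroup β] {s : Finset α}
    {a b : α} (f : α → β) (ha : a ∈ s) (hb : b ∉ s.erase a) :
    ∑ x ∈ insert b (s.erase a), f x = ∑ x ∈ s, f x - f a + f b := by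
  rw [Finset.sum_insert hb, Finset.sum_erase_eq_sub ha, add_comm]

namespace ValuatedMatroid

theorem initSet_nonempty {E : Type*} [Finite E] [Nonempty E] (H : E → WithTop ℝ) (w : E → ℝ) :
    (initSet H w).Nonempty :=
  Finite.exists_min fun x => H x + (w x : WithTop ℝ)

theorem ne_top_of_mem_initSet {E : Type*} {w : E → ℝ} {H : E → WithTop ℝ} {e f : E}
    (hf : f ∈ initSet H w) (he : H e ≠ ⊤) : H f ≠ ⊤ :=
  (WithTop.add_ne_top.1 (ne_top_of_le_ne_top (WithTop.add_ne_top.2 ⟨he, WithTop.coe_ne_top⟩)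
    (hf e))).1

variable {E : Type*} [DecidableEq E] [Fintype E] {r : ℕ} (M : ValuatedMatroid E r) (w : E → ℝ)

theorem pw_exchange {A B : Finset E} (hA : A.card = r) (hB : B.card = r) {a : E}
    (ha : a ∈ A \ B) :
    ∃ b ∈ B \ A, M.pw w (insert b (A.erase a)) + M.pw w (insert a (B.erase b)) ≤
      M.pw w A + M.pw w B := by
  obtain ⟨b, hb, hle⟩ := M.exchange A B hA hB a ha
  refine ⟨b, hb, ?_⟩
  rw [Finset.mem_sdiff] at ha hb
  have hsum : -(∑ x ∈ insert b (A.erase a), w x) + -(∑ x ∈ insert a (B.erase b), w x) =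
      -(∑ x ∈ A, w x) + -(∑ x ∈ B, w x) := by
    rw [Finset.sum_insert_erase w ha.1 fun h => hb.2 (Finset.mem_of_mem_erase h),
      Finset.sum_insert_erase w hb.1 fun h => ha.2 (Finset.mem_of_mem_erase h)]
    ring
  simp only [pw]
  rw [add_add_add_comm, ← WithTop.coe_add, hsum, add_add_add_comm _ (_ : WithTop ℝ),
    ← WithTop.coe_add]
  exact add_le_add_left hle _

variable {M w}

theorem IsInitBasis.pw_le {B : Finset E} (hB : M.IsInitBasis w B) (S : Finset E) :
    M.pw w B ≤ M.pw w S :=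
  hB.2 ▸ Finset.inf_le (Finset.mem_powerset.2 (Finset.subset_univ S))

theorem IsInitBasis.pw_ne_top {B : Finset E} (hB : M.IsInitBasis w B) : M.pw w B ≠ ⊤ := by
  obtain ⟨B', hB'⟩ := M.exists_ne_top
  refine ne_top_of_le_ne_top ?_ (hB.pw_le B')
  exact WithTop.add_ne_top.2 ⟨hB', WithTop.coe_ne_top⟩

theorem IsInitBasis.exists_pw_insert_erase_le {A B : Finset E} (hB : M.IsInitBasis w B)
    (hA : A.card = r) {a : E} (ha : a ∈ B \ A) :
    ∃ b ∈ A \ B, M.pw w (insert a (A.erase b)) ≤ M.pw w A := by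
  obtain ⟨b, hb, hle⟩ := M.pw_exchange w hB.1 hA ha
  refine ⟨b, hb, (WithTop.add_le_add_iff_left hB.pw_ne_top).1 ?_⟩
  calc M.pw w B + M.pw w (insert a (A.erase b))
      ≤ M.pw w (insert b (B.erase a)) + M.pw w (insert a (A.erase b)) :=
        add_le_add_left (hB.pw_le _) _
    _ ≤ M.pw w B + M.pw w A := hle

theorem IsValuatedCircuit.exists_eq_add_p_erase {H : E → WithTop ℝ}
    (hH : M.IsValuatedCircuit H) :
    ∃ C : Finset E, C.card = r + 1 ∧ ∃ c : ℝ, ∀ x, H x = M.p (C.erase x) + c := by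
  obtain ⟨B', e, lam, hB', he, hHB'⟩ := hH
  refine ⟨insert e B', ?_, lam - (M.p B').untopD 0, fun x => ?_⟩
  · rw [Finset.card_insert_of_notMem he, M.card_of_ne_top B' hB']
  · rw [hHB', fundCircuit, add_left_comm, sub_eq_add_neg, WithTop.coe_add]

theorem IsValuatedCircuit.exists_ne_top {H : E → WithTop ℝ} (hH : M.IsValuatedCircuit H) :
    ∃ e, H e ≠ ⊤ := by
  obtain ⟨B', e, lam, hB', he, hHB'⟩ := hH
  refine ⟨e, ?_⟩
  rw [hHB', fundCircuit, Finset.erase_insert he]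
  exact WithTop.add_ne_top.2 ⟨WithTop.coe_ne_top, WithTop.add_ne_top.2 ⟨hB', WithTop.coe_ne_top⟩⟩

theorem mem_of_p_erase_ne_top {C : Finset E} (hC : C.card = r + 1) {x : E}
    (hx : M.p (C.erase x) ≠ ⊤) : x ∈ C := by
  by_contra hxC
  rw [Finset.erase_eq_of_notMem hxC] at hx
  have := M.card_of_ne_top C hx
  omega

theorem add_weight_eq_pw_erase {H : E → WithTop ℝ} {C : Finset E} {c : ℝ}
    (hH : ∀ x, H x = M.p (C.erase x) + c) {x : E} (hx : x ∈ C) :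
    H x + (w x : WithTop ℝ) = M.pw w (C.erase x) + ((c + ∑ y ∈ C, w y : ℝ) : WithTop ℝ) := by
  rw [hH, pw, Finset.sum_erase_eq_sub hx, add_assoc, add_assoc, ← WithTop.coe_add,
    ← WithTop.coe_add]
  congr 2
  ring

end ValuatedMatroid

/-- **Initial sets of valuated circuits are dependent in the initial matroid.**  For a
valuated matroid `M` on a finite ground set `E` and `w ∈ ℝ^E`, no set `in_w(H)` for `H`
a valuated circuit of `M` is contained in a basis of the initial matroid `in_w(M)`. -/
theorem initSet_circuit_dependent {E : Type*} [DecidableEq E] [Fintype E] {r : ℕ}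
    (M : ValuatedMatroid E r) (w : E → ℝ) (H : E → WithTop ℝ)
    (hH : M.IsValuatedCircuit H) :
    ¬ ∃ B : Finset E, M.IsInitBasis w B ∧ initSet H w ⊆ (B : Set E) := by
  rintro ⟨B, hB, hsub⟩
  obtain ⟨C, hC, c, hHC⟩ := hH.exists_eq_add_p_erase
  obtain ⟨e, he⟩ := hH.exists_ne_top
  have : Nonempty E := ⟨e⟩
  obtain ⟨f, hf⟩ := initSet_nonempty H w
  have hfC : f ∈ C := M.mem_of_p_erase_ne_top hC fun htop => ne_top_of_mem_initSet hf he <| by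
    rw [hHC, htop, top_add]
  have hfB : f ∈ B \ C.erase f := Finset.mem_sdiff.2 ⟨hsub hf, Finset.notMem_erase f C⟩
  obtain ⟨b, hb, hle⟩ := hB.exists_pw_insert_erase_le
    (by rw [Finset.card_erase_of_mem hfC, hC, Nat.add_sub_cancel]) hfB
  obtain ⟨hbC, hbB⟩ := Finset.mem_sdiff.1 hb
  rw [Finset.erase_right_comm, Finset.insert_erase (Finset.mem_erase.2
    ⟨(Finset.ne_of_mem_erase hbC).symm, hfC⟩)] at hle
  have hbf : H b + (w b : WithTop ℝ) ≤ H f + (w f : WithTop ℝ) := by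
    rw [add_weight_eq_pw_erase hHC (Finset.mem_of_mem_erase hbC),
      add_weight_eq_pw_erase hHC hfC]
    exact add_le_add_left hle _
  exact hbB (hsub fun x => hbf.trans (hf x))
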